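/- Let ℓ ≥ 2, and let 𝒮_ℓ be the class of all solvable groups of solvability length at most ℓ, i.e., all groups G whose ℓ-th derived subgroup is trivial (derivedSeries G ℓ = ⊥). Then 𝒮_ℓ has instances of nontrivial dominions: there exist a group G ∈ 𝒮_ℓ and a subgroup H of G with H strictly contained in dom_G^{𝒮_ℓ}(H). -/

import Mathlib

/-- A bundled group: a type in universe `u` together with a group structure. -/
structure GroupT : Type (u + 1) where
  carrier : Type u
  [str : Group carrier]

attribute [instance] GroupT.str

/-- A variety of groups: a class of groups closed under isomorphism, subgroups,
homomorphic images, and arbitrary direct products indexed by types in the universe. -/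
structure GroupVariety : Type (u + 1) where
  Mem : GroupT.{u} → Prop
  iso_closed : ∀ {G H : GroupT.{u}}, G.carrier ≃* H.carrier → Mem G → Mem H
  subgroup_closed : ∀ (G : GroupT.{u}) (H : Subgroup G.carrier), Mem G → Mem ⟨H⟩
  quotient_closed : ∀ (G H : GroupT.{u}) (f : G.carrier →* H.carrier),
      Function.Surjective f → Mem G → Mem H
  pi_closed : ∀ (ι : Type u) (f : ι → GroupT.{u}),
      (∀ i, Mem (f i)) → Mem ⟨∀ i, (f i).carrier⟩

/-- A variety is nontrivial if it contains some nontrivial group and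
does not contain all groups. -/
def GroupVariety.IsNontrivial (V : GroupVariety.{u}) : Prop :=
  (∃ G : GroupT.{u}, V.Mem G ∧ Nontrivial G.carrier) ∧ ∃ G : GroupT.{u}, ¬ V.Mem G

/-- The dominion of a subgroup `H` of `G` relative to a class `C` of groups:
all elements of `G` on which any two homomorphisms into a `C`-group agreeing on `H`
must agree. -/
def dominion (C : GroupT.{u} → Prop) (G : Type u) [Group G] (H : Subgroup G) : Set G :=
  {a | ∀ K : GroupT.{u}, C K → ∀ f g : G →* K.carrier, (∀ h ∈ H, f h = g h) → f a = g a}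

/-- The product variety `𝒩𝒬`: the class of groups having a normal subgroup in `𝒩`
with quotient in `𝒬`. -/
def ProductVariety (N Q : GroupVariety.{u}) (G : GroupT.{u}) : Prop :=
  ∃ (M : Subgroup G.carrier) (h : M.Normal),
    N.Mem ⟨M⟩ ∧ (letI := h; Q.Mem ⟨G.carrier ⧸ M⟩)

/-- The verbal subgroup `𝒬(G)`: the intersection of all normal subgroups of `G`
whose quotient lies in `𝒬`. -/
def verbalSubgroup (Q : GroupVariety.{u}) (G : Type u) [Group G] : Subgroup G :=
  ⨅ M ∈ {M : Subgroup G | ∃ h : M.Normal, (letI := h; Q.Mem ⟨G ⧸ M⟩)}, M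

/-- A class of groups has instances of nontrivial dominions if there is a group `G`
in the class and a subgroup `H` of `G` strictly contained in its dominion in `G`. -/
def HasNontrivialDominions (C : GroupT.{u} → Prop) : Prop :=
  ∃ (G : GroupT.{u}) (H : Subgroup G.carrier),
    C G ∧ (H : Set G.carrier) ⊂ dominion C G.carrier H

/-!
Let `G₀ = C₂ ≀ C₂³`, with `c, u, w` the generators of the top group and `y` a generator of
one base coordinate, and put `x = ⁅w, y⁆` and `H = ⟨x, u x u⁻¹, ⁅c, x⁆⟩`. All generators of `H`
lie in the base group and have trivial coordinate at `c u`, while `⁅c, u x u⁻¹⁆` does not, so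
`⁅c, u x u⁻¹⁆ ∉ H`.

Now let `f, g : G₀ → K` agree on `H`, with images in `K⁽ᵐ⁾` and `K⁽ᵐ⁺²⁾ = 1`. Then
`T = K⁽ᵐ⁺¹⁾` is an abelian normal subgroup containing `f x`, and elements of `K⁽ᵐ⁾` act on `T`
by commuting conjugations. As `f ⁅c, x⁆ = g ⁅c, x⁆`, the elements `f c` and `g c` act alike
on `f x`, hence also on its conjugate `f (u x u⁻¹)` by `f u`, which gives
`f ⁅c, u x u⁻¹⁆ = g ⁅c, u x u⁻¹⁆`.

It remains to embed `G₀` into the `m`-th derived subgroup of a group of derived length `m + 2`.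
In `D ≀ ℤ` the constant function `d` is the commutator of `n ↦ dⁿ` with the generator of `ℤ`,
so the diagonal embeds `D` into `(D ≀ ℤ)'`, while the derived length grows by at most one;
iterate `m` times.
-/

open scoped commutatorElement

section DerivedSeries

variable {A G : Type*} [Group A] [Group G]

theorem map_derivedSeries_le_of_range_le {φ : A →* G} {k : ℕ}
    (hφ : φ.range ≤ derivedSeries G k) (n : ℕ) :
    (derivedSeries A n).map φ ≤ derivedSeries G (k + n) := by
  induction n with
  | zero => rwa [derivedSeries_zero, ← MonoidHom.range_eq_map]
  | succ n ih =>
    rw [derivedSeries_succ, Subgroup.map_commutator]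
    exact Subgroup.commutator_mono ih ih

theorem derivedSeries_succ_le_map_of_commutator_le {φ : A →* G}
    (hφ : commutator G ≤ φ.range) (n : ℕ) :
    derivedSeries G (n + 1) ≤ (derivedSeries A n).map φ := by
  induction n with
  | zero => rwa [derivedSeries_zero, ← MonoidHom.range_eq_map]
  | succ n ih =>
    rw [derivedSeries_succ G (n + 1), derivedSeries_succ A n, Subgroup.map_commutator]
    exact Subgroup.commutator_mono ih ih

theorem derivedSeries_pi_eq_bot {ι : Type*} {n : ℕ} (h : derivedSeries A n = ⊥) :
    derivedSeries (ι → A) n = ⊥ := by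
  refine (Subgroup.eq_bot_iff_forall _).2 fun f hf => funext fun i => ?_
  have := map_derivedSeries_le_derivedSeries (Pi.evalMonoidHom (fun _ => A) i) n
    (Subgroup.mem_map_of_mem _ hf)
  rwa [h, Subgroup.mem_bot] at this

end DerivedSeries

theorem conj_conj_comm_of_commutator_mem {G : Type*} [Group G] {T : Subgroup G} [T.Normal]
    (hT : ⁅T, T⁆ = ⊥) {a b n : G} (hab : ⁅a, b⁆ ∈ T) (hn : n ∈ T) :
    a * (b * n * b⁻¹) * a⁻¹ = b * (a * n * a⁻¹) * b⁻¹ := by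
  have hcomm : b * (a * n * a⁻¹) * b⁻¹ * ⁅a, b⁆ = ⁅a, b⁆ * (b * (a * n * a⁻¹) * b⁻¹) :=
    Subgroup.mem_centralizer_iff.1 (Subgroup.commutator_eq_bot_iff_le_centralizer.1 hT hab) _
      (Subgroup.Normal.conj_mem ‹_› _ (Subgroup.Normal.conj_mem ‹_› n hn a) b)
  calc a * (b * n * b⁻¹) * a⁻¹
      = ⁅a, b⁆ * (b * (a * n * a⁻¹) * b⁻¹) * ⁅a, b⁆⁻¹ := by group
    _ = b * (a * n * a⁻¹) * b⁻¹ := by rw [← hcomm]; group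

namespace RegularWreathProduct

variable {D Q : Type*} [Group D]

def base [Group Q] : (Q → D) →* D ≀ᵣ Q where
  toFun f := ⟨f, 1⟩
  map_one' := rfl
  map_mul' f g := by ext <;> simp

theorem base_injective [Group Q] : Function.Injective (base : (Q → D) →* D ≀ᵣ Q) :=
  fun _ _ h => congrArg left h

theorem commutator_le_range_base [CommGroup Q] :
    commutator (D ≀ᵣ Q) ≤ (base : (Q → D) →* D ≀ᵣ Q).range := by
  intro g hg
  refine ⟨g.left, ?_⟩
  have : g.right = 1 := Abelianization.commutator_subset_ker rightHom hg
  ext <;> simp [base, this]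

theorem derivedSeries_succ_eq_bot [CommGroup Q] {n : ℕ} (hD : derivedSeries D n = ⊥) :
    derivedSeries (D ≀ᵣ Q) (n + 1) = ⊥ := by
  refine le_bot_iff.1
    ((derivedSeries_succ_le_map_of_commutator_le commutator_le_range_base n).trans ?_)
  rw [derivedSeries_pi_eq_bot hD, Subgroup.map_bot]

def trivialAt [Group Q] (q : Q) : Subgroup (D ≀ᵣ Q) where
  carrier := {g | g.right = 1 ∧ g.left q = 1}
  one_mem' := ⟨rfl, rfl⟩
  mul_mem' := by
    rintro a b ⟨ha, ha'⟩ ⟨hb, hb'⟩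
    exact ⟨by simp [ha, hb], by simp [ha, ha', hb']⟩
  inv_mem' := by
    rintro a ⟨ha, ha'⟩
    exact ⟨by simp [ha], by simp [ha, ha']⟩

theorem mem_trivialAt [Group Q] {q : Q} {g : D ≀ᵣ Q} :
    g ∈ trivialAt q ↔ g.right = 1 ∧ g.left q = 1 :=
  Iff.rfl

def diag : D →* D ≀ᵣ Multiplicative ℤ := base.comp (Pi.constMonoidHom _ D)

theorem diag_injective : Function.Injective (diag : D →* D ≀ᵣ Multiplicative ℤ) :=
  base_injective.comp fun _ _ h => congrFun h 1

theorem diag_eq_commutator (d : D) :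
    diag d = ⁅base fun n : Multiplicative ℤ => d ^ n.toAdd, inl (Multiplicative.ofAdd 1)⁆ := by
  ext n
  · simp [diag, base, commutatorElement_def, zpow_add]
  · simp [diag, base, commutatorElement_def]

theorem range_diag_le_commutator : (diag : D →* D ≀ᵣ Multiplicative ℤ).range ≤ commutator _ := by
  rintro _ ⟨d, rfl⟩
  rw [diag_eq_commutator]
  exact Subgroup.commutator_mem_commutator (Subgroup.mem_top _) (Subgroup.mem_top _)

end RegularWreathProduct

theorem exists_injective_range_le_derivedSeries {P : Type v} [Group P] {k : ℕ}
    (hP : derivedSeries P k = ⊥) (m : ℕ) :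
    ∃ (W : GroupT.{max v u}) (ι : P →* W.carrier), Function.Injective ι ∧
      ι.range ≤ derivedSeries W.carrier m ∧ derivedSeries W.carrier (m + k) = ⊥ := by
  induction m with
  | zero =>
    let e : P ≃* ULift.{u} P := MulEquiv.ulift.symm
    refine ⟨⟨ULift.{u} P⟩, e.toMonoidHom, e.injective, le_top, ?_⟩
    rw [zero_add, ← map_derivedSeries_eq (f := e.toMonoidHom) e.surjective, hP, Subgroup.map_bot]
  | succ m ih =>
    obtain ⟨W, ι, hι, hrange, hW⟩ := ih
    refine ⟨⟨W.carrier ≀ᵣ Multiplicative ℤ⟩, RegularWreathProduct.diag.comp ι,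
      RegularWreathProduct.diag_injective.comp hι, ?_, ?_⟩
    · rw [MonoidHom.range_comp, add_comm]
      exact (Subgroup.map_mono hrange).trans
        (map_derivedSeries_le_of_range_le RegularWreathProduct.range_diag_le_commutator m)
    · rw [add_right_comm]
      exact RegularWreathProduct.derivedSeries_succ_eq_bot hW

theorem map_commutator_conj_eq {B K : Type*} [Group B] [Group K] {m : ℕ}
    (hK : derivedSeries K (m + 2) = ⊥) {F G : B →* K}
    (hF : F.range ≤ derivedSeries K m) (hG : G.range ≤ derivedSeries K m)
    {c u x : B} (hx : x ∈ commutator B) (hx₁ : F x = G x)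
    (hx₂ : F (u * x * u⁻¹) = G (u * x * u⁻¹)) (hx₃ : F ⁅c, x⁆ = G ⁅c, x⁆) :
    F ⁅c, u * x * u⁻¹⁆ = G ⁅c, u * x * u⁻¹⁆ := by
  have hT : ⁅derivedSeries K (m + 1), derivedSeries K (m + 1)⁆ = ⊥ := hK
  have hxT : F x ∈ derivedSeries K (m + 1) :=
    map_derivedSeries_le_of_range_le hF 1 (Subgroup.mem_map_of_mem F hx)
  have hcomm : ∀ {a}, a ∈ derivedSeries K m → ⁅a, F u⁆ ∈ derivedSeries K (m + 1) :=
    fun ha => Subgroup.commutator_mem_commutator ha (hF ⟨u, rfl⟩)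
  have hconj : F c * F x * (F c)⁻¹ = G c * F x * (G c)⁻¹ := by
    simpa [commutatorElement_def, hx₁] using hx₃
  rw [map_commutatorElement, map_commutatorElement, ← hx₂, commutatorElement_def,
    commutatorElement_def, map_mul, map_mul, map_inv,
    conj_conj_comm_of_commutator_mem hT (hcomm (hF ⟨c, rfl⟩)) hxT,
    conj_conj_comm_of_commutator_mem hT (hcomm (hG ⟨c, rfl⟩)) hxT, hconj]

namespace WreathCube

open RegularWreathProduct

abbrev Cube : Type := Multiplicative (ZMod 2 × ZMod 2 × ZMod 2)

abbrev G₀ : Type := Multiplicative (ZMod 2) ≀ᵣ Cube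

def c : G₀ := inl (.ofAdd (1, 0, 0))
def u : G₀ := inl (.ofAdd (0, 1, 0))
def w : G₀ := inl (.ofAdd (0, 0, 1))
def y : G₀ := base (Pi.mulSingle 1 (.ofAdd 1))
def x : G₀ := ⁅w, y⁆

theorem x_mem_commutator : x ∈ commutator G₀ :=
  Subgroup.commutator_mem_commutator (Subgroup.mem_top w) (Subgroup.mem_top y)

theorem derivedSeries_two_eq_bot : derivedSeries G₀ 2 = ⊥ :=
  derivedSeries_succ_eq_bot (commutator_eq_bot _)

theorem commutator_conj_notMem_closure :
    ⁅c, u * x * u⁻¹⁆ ∉ Subgroup.closure {x, u * x * u⁻¹, ⁅c, x⁆} := by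
  have hle : Subgroup.closure {x, u * x * u⁻¹, ⁅c, x⁆} ≤ trivialAt (.ofAdd (1, 1, 0)) := by
    rw [Subgroup.closure_le]
    rintro g (rfl | rfl | rfl) <;> rw [SetLike.mem_coe, mem_trivialAt] <;> decide
  exact fun h => absurd (mem_trivialAt.1 (hle h)).2 (by decide)

end WreathCube

theorem subset_dominion (C : GroupT.{u} → Prop) (G : Type u) [Group G] (H : Subgroup G) :
    (H : Set G) ⊆ dominion C G H :=
  fun a ha _ _ _ _ hfg => hfg a ha

theorem map_commutator_conj_mem_dominion {B : Type*} [Group B] {G : Type u} [Group G] {m : ℕ}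
    {ι : B →* G} (hι : ι.range ≤ derivedSeries G m) {c u x : B} (hx : x ∈ commutator B) :
    ι ⁅c, u * x * u⁻¹⁆ ∈ dominion (fun K : GroupT.{u} => derivedSeries K.carrier (m + 2) = ⊥) G
      ((Subgroup.closure {x, u * x * u⁻¹, ⁅c, x⁆}).map ι) := by
  intro K hK f g hfg
  have hagree : ∀ b ∈ ({x, u * x * u⁻¹, ⁅c, x⁆} : Set B), f (ι b) = g (ι b) :=
    fun b hb => hfg _ (Subgroup.mem_map_of_mem ι (Subgroup.subset_closure hb))
  have hrange : ∀ φ : G →* K.carrier, (φ.comp ι).range ≤ derivedSeries K.carrier m :=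
    fun φ => (MonoidHom.range_comp φ ι).trans_le
      ((Subgroup.map_mono hι).trans (map_derivedSeries_le_derivedSeries φ m))
  exact map_commutator_conj_eq hK (hrange f) (hrange g) hx
    (hagree _ (by simp)) (hagree _ (by simp)) (hagree _ (by simp))

theorem stmt19 (ℓ : ℕ) (hℓ : 2 ≤ ℓ) :
    HasNontrivialDominions (fun G : GroupT.{u} => derivedSeries G.carrier ℓ = ⊥) := by
  open WreathCube in
  obtain ⟨m, rfl⟩ := Nat.exists_eq_add_of_le' hℓ
  obtain ⟨W, ι, hι, hrange, hW⟩ :=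
    exists_injective_range_le_derivedSeries.{0, u} derivedSeries_two_eq_bot m
  refine ⟨W, (Subgroup.closure {x, u * x * u⁻¹, ⁅c, x⁆}).map ι, hW,
    (Set.ssubset_iff_of_subset (subset_dominion _ _ _)).2 ⟨ι ⁅c, u * x * u⁻¹⁆,
      map_commutator_conj_mem_dominion hrange x_mem_commutator, ?_⟩⟩
  rintro ⟨b, hb, hbeq⟩
  exact commutator_conj_notMem_closure (hι hbeq ▸ hb)
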